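/- arXiv:2406.13418 — 5 statements merged into one kernel-verified Lean document; each statement's English description precedes it below -/
import Mathlib

section
/- In an abelian category A, for a full subcategory S and natural numbers m, n, the class (S)_{m+n} equals (S)_m * (S)_n, where X * Z denotes the class of objects y fitting in a short exact sequence x ↪ y ↠ z with x ∈ X, z ∈ Z. -/
open CategoryTheory CategoryTheory.Limits

namespace Paper

variable {C : Type*} [Category C] [Abelian C]

/-- Membership in `S ∪ {0}`, up to isomorphism. -/
def MemS0 (S : Set C) (x : C) : Prop :=
  (∃ s ∈ S, Nonempty (x ≅ s)) ∨ IsZero x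

/-- `x ∈ (S)ₙ` : `x` admits a filtration `⊥ = c 0 ⊆ ⋯ ⊆ c n = ⊤` of subobjects whose
successive quotients lie in `S ∪ {0}`. -/
def MemFilt (S : Set C) (n : ℕ) (x : C) : Prop :=
  ∃ (c : Fin (n + 1) → Subobject x) (hc : Monotone c),
    c 0 = ⊥ ∧ c (Fin.last n) = ⊤ ∧
      ∀ i : Fin n,
        MemS0 S
          (cokernel (Subobject.ofLE (c i.castSucc) (c i.succ) (hc (Fin.castSucc_le_succ i))))

/-- The extension closure `⟨S⟩ = ⋃ₙ (S)ₙ`. -/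
def ExtClosure (S : Set C) : Set C := {x | ∃ n, MemFilt S n x}

/-- `X * Z` : the objects `y` admitting a short exact sequence `x ↪ y ↠ z` with
`x ∈ X` and `z ∈ Z`. -/
def SesStar (X Z : Set C) : Set C :=
  {y | ∃ (x z : C) (f : x ⟶ y) (g : y ⟶ z) (w : f ≫ g = 0),
      x ∈ X ∧ z ∈ Z ∧ (ShortComplex.mk f g w).ShortExact}

/-- `Gen S` : quotients of objects of `S`. -/
def GenCl (S : Set C) : Set C := {x | ∃ s ∈ S, ∃ f : s ⟶ x, Epi f}

/-- `Sub S` : subobjects of objects of `S`. -/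
def SubCl (S : Set C) : Set C := {x | ∃ s ∈ S, ∃ f : x ⟶ s, Mono f}

/-- `S^⊥` : objects receiving no nonzero morphism from objects of `S`. -/
def PerpR (S : Set C) : Set C := {x | ∀ s ∈ S, ∀ f : s ⟶ x, f = 0}

/-- `^⊥S` : objects admitting no nonzero morphism to objects of `S`. -/
def PerpL (S : Set C) : Set C := {x | ∀ s ∈ S, ∀ f : x ⟶ s, f = 0}

/-- A class is closed under quotients. -/
def ClosedUnderQuotients (X : Set C) : Prop :=
  ∀ ⦃y a : C⦄ (f : y ⟶ a), Epi f → y ∈ X → a ∈ X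

/-- A class is closed under subobjects. -/
def ClosedUnderSubobjects (X : Set C) : Prop :=
  ∀ ⦃a y : C⦄ (f : a ⟶ y), Mono f → y ∈ X → a ∈ X

/-- A class is closed under isomorphisms (i.e. is a strictly full subcategory). -/
def IsoClosed (X : Set C) : Prop := ∀ ⦃x y : C⦄, (x ≅ y) → x ∈ X → y ∈ X

/-- `(T, F)` is a torsion pair: both classes are strictly full, `Hom(T, F) = 0`,
and every object fits in a short exact sequence `t ↪ x ↠ f` with `t ∈ T`, `f ∈ F`. -/
def IsTorsionPair (Tc F : Set C) : Prop :=
  IsoClosed Tc ∧ IsoClosed F ∧ (∀ t ∈ Tc, ∀ f ∈ F, ∀ g : t ⟶ f, g = 0) ∧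
    ∀ y : C, y ∈ SesStar Tc F

/-- `(S₀, S₁, S₂)` is a torsion triple. -/
def IsTorsionTriple (S₀ S₁ S₂ : Set C) : Prop :=
  IsoClosed S₀ ∧ IsoClosed S₁ ∧ IsoClosed S₂ ∧
    (∀ s ∈ S₀, ∀ t ∈ S₁, ∀ g : s ⟶ t, g = 0) ∧
    (∀ s ∈ S₀, ∀ t ∈ S₂, ∀ g : s ⟶ t, g = 0) ∧
    (∀ s ∈ S₁, ∀ t ∈ S₂, ∀ g : s ⟶ t, g = 0) ∧
    ∀ y : C, y ∈ SesStar S₀ (SesStar S₁ S₂)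

end Paper

namespace Paper

/-- A noetherian abelian category: ascending chains of subobjects stabilise. -/
def NoethCat (C : Type*) [Category C] [Abelian C] : Prop :=
  ∀ (x : C) (f : ℕ →o Subobject x), ∃ n, ∀ m, n ≤ m → f n = f m

end Paper

/-!
Cutting a filtration of length `n + 1` at its penultimate step shows
`(S)_{n+1} = (S)_n * (S ∪ {0})`, and `*` is associative in an abelian category:
`(X * Y) * Z ⊆ X * (Y * Z)` by the third isomorphism theorem `(y/x)/(w/x) ≅ y/w`, and the
reverse inclusion by taking the kernel of the composite epimorphism `y ↠ q ↠ s`.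
Induction on `n` then gives `(S)_{m+n} = (S)_m * (S)_n`.
-/

namespace Paper

variable {C : Type*} [Category C] [Abelian C]

open Subobject

section ShortExact

lemma shortExact_of_iso_ends {S : ShortComplex C} (hS : S.ShortExact) {X₁ X₃ : C}
    (e₁ : X₁ ≅ S.X₁) (e₃ : S.X₃ ≅ X₃) :
    (ShortComplex.mk (e₁.hom ≫ S.f) (S.g ≫ e₃.hom) (by simp)).ShortExact :=
  ShortComplex.shortExact_of_iso
    (ShortComplex.isoMk e₁.symm (Iso.refl _) e₃ (by simp) (by simp)) hS

noncomputable def kernelIsoOfShortExact {S : ShortComplex C} (hS : S.ShortExact) :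
    kernel S.g ≅ S.X₁ :=
  (kernelIsKernel S.g).conePointUniqueUpToIso hS.fIsKernel

noncomputable def cokernelIsoOfShortExact {S : ShortComplex C} (hS : S.ShortExact) :
    cokernel S.f ≅ S.X₃ :=
  (cokernelIsCokernel S.f).coconePointUniqueUpToIso hS.gIsCokernel

lemma shortExact_cokernel {x y : C} (f : x ⟶ y) [Mono f] :
    (ShortComplex.mk f (cokernel.π f) (cokernel.condition f)).ShortExact :=
  .mk' (ShortComplex.exact_cokernel f) inferInstance inferInstance

lemma shortExact_kernel {x y : C} (g : x ⟶ y) [Epi g] :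
    (ShortComplex.mk (kernel.ι g) g (kernel.condition g)).ShortExact :=
  .mk' (ShortComplex.exact_kernel g) inferInstance inferInstance

-- `kernelCokernelCompSequence f g` is the exact sequence, indexed from `0`,
-- `ker f ⟶ ker (f ≫ g) ⟶ ker g ⟶ coker f ⟶ coker (f ≫ g) ⟶ coker g`.
lemma shortExact_cokernel_comp {x y z : C} (f : x ⟶ y) (g : y ⟶ z) [Mono g] :
    (ShortComplex.mk (cokernel.map f (f ≫ g) (𝟙 _) g (by simp))
      (cokernel.map (f ≫ g) g f (𝟙 _) (by simp)) (by ext; simp)).ShortExact := by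
  have hex := kernelCokernelCompSequence_exact f g
  have hδ : kernelCokernelCompSequence.δ f g = 0 := (isZero_kernel_of_mono g).eq_of_src _ _
  exact .mk' (hex.exact 3) ((hex.exact 2).mono_g hδ) (epi_of_epi_fac (cokernel.π_desc _ _ _))

lemma shortExact_kernel_comp {x y z : C} (f : x ⟶ y) (g : y ⟶ z) [Epi f] :
    (ShortComplex.mk (kernel.map f (f ≫ g) (𝟙 _) g (by simp))
      (kernel.map (f ≫ g) g f (𝟙 _) (by simp)) (by ext; simp)).ShortExact := by
  have hex := kernelCokernelCompSequence_exact f g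
  have hδ : kernelCokernelCompSequence.δ f g = 0 := (isZero_cokernel_of_epi f).eq_of_tgt _ _
  exact .mk' (hex.exact 0) (mono_of_mono_fac (kernel.lift_ι _ _ _)) ((hex.exact 1).epi_f hδ)

end ShortExact

section SesStar

theorem sesStar_assoc (X Y Z : Set C) : SesStar (SesStar X Y) Z = SesStar X (SesStar Y Z) := by
  ext y
  constructor
  · rintro ⟨w, z, h, k, _, ⟨x, v, f, g, _, hx, hv, hS₁⟩, hz, hS₂⟩
    have := hS₁.mono_f
    have := hS₂.mono_f
    exact ⟨x, cokernel (f ≫ h), f ≫ h, cokernel.π _, cokernel.condition _, hx,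
      ⟨v, z, _, _, _, hv, hz, shortExact_of_iso_ends (shortExact_cokernel_comp f h)
        (cokernelIsoOfShortExact hS₁).symm (cokernelIsoOfShortExact hS₂)⟩,
      shortExact_cokernel _⟩
  · rintro ⟨x, q, f, p, _, hx, ⟨v, s, i, t, _, hv, hs, hS₂⟩, hS₁⟩
    have := hS₁.epi_g
    have := hS₂.epi_g
    exact ⟨kernel (p ≫ t), s, kernel.ι _, p ≫ t, kernel.condition _,
      ⟨x, v, _, _, _, hx, hv, shortExact_of_iso_ends (shortExact_kernel_comp p t)
        (kernelIsoOfShortExact hS₁).symm (kernelIsoOfShortExact hS₂)⟩,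
      hs, shortExact_kernel _⟩

theorem sesStar_setOf_isZero {X : Set C} (hX : IsoClosed X) : SesStar X {z | IsZero z} = X := by
  ext y
  constructor
  · rintro ⟨x, z, f, g, _, hx, hz, hS⟩
    have : IsIso f := hS.isIso_f_iff.2 hz
    exact hX (asIso f) hx
  · intro hy
    exact ⟨y, cokernel (𝟙 y), 𝟙 y, cokernel.π _, cokernel.condition _, hy,
      isZero_cokernel_of_epi _, shortExact_cokernel _⟩

end SesStar

section Filtration

variable {S : Set C}

omit [Abelian C] in
theorem MemS0.of_iso {x y : C} (h : MemS0 S x) (e : x ≅ y) : MemS0 S y := by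
  rcases h with ⟨s, hs, ⟨i⟩⟩ | hz
  · exact Or.inl ⟨s, hs, ⟨e.symm ≪≫ i⟩⟩
  · exact Or.inr (hz.of_iso e.symm)

theorem memS0_cokernel_ofLE_iff {y X₁ X₂ : C} {A B : Subobject y} (h : A ≤ B)
    {g₁ : X₁ ⟶ y} {g₂ : X₂ ⟶ y} [Mono g₁] [Mono g₂] (hA : A = mk g₁) (hB : B = mk g₂)
    {t : X₁ ⟶ X₂} (w : t ≫ g₂ = g₁) :
    MemS0 S (cokernel (ofLE A B h)) ↔ MemS0 S (cokernel t) := by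
  subst hA hB
  let e : cokernel (ofLE _ _ h) ≅ cokernel t :=
    cokernel.mapIso _ t (underlyingIso g₁) (underlyingIso g₂) (by simp [← cancel_mono g₂, w])
  exact ⟨fun hm => hm.of_iso e, fun hm => hm.of_iso e.symm⟩

omit [Abelian C] in
theorem monotone_mk_arrow_comp {x y : C} (f : x ⟶ y) [Mono f] :
    Monotone fun A : Subobject x => mk (A.arrow ≫ f) :=
  fun A B h => mk_le_mk_of_comm (ofLE A B h) (by simp)

theorem memS0_cokernel_ofLE_mk_arrow_comp {x y : C} (f : x ⟶ y) [Mono f] {A B : Subobject x}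
    (h : A ≤ B) (hAB : MemS0 S (cokernel (ofLE A B h))) :
    MemS0 S (cokernel (ofLE _ _ (monotone_mk_arrow_comp f h))) :=
  (memS0_cokernel_ofLE_iff _ rfl rfl (by simp)).2 hAB

theorem mk_bot_arrow_comp {x y : C} (f : x ⟶ y) [Mono f] :
    mk ((⊥ : Subobject x).arrow ≫ f) = ⊥ := by
  rw [mk_eq_bot_iff_zero, bot_arrow, zero_comp]

theorem MemFilt.of_iso {n : ℕ} {x y : C} (hx : MemFilt S n x) (e : x ≅ y) : MemFilt S n y := by
  obtain ⟨c, hc, h0, htop, hq⟩ := hx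
  refine ⟨fun i => mk ((c i).arrow ≫ e.hom), (monotone_mk_arrow_comp e.hom).comp hc,
    ?_, ?_, fun i => memS0_cokernel_ofLE_mk_arrow_comp _ _ (hq i)⟩
  · show mk ((c 0).arrow ≫ e.hom) = ⊥
    rw [h0, mk_bot_arrow_comp]
  · show mk ((c (Fin.last n)).arrow ≫ e.hom) = ⊤
    rw [htop]
    exact mk_eq_top_of_isIso _

theorem isoClosed_setOf_memFilt (n : ℕ) : IsoClosed {y : C | MemFilt S n y} :=
  fun _ _ e hx => MemFilt.of_iso hx e

theorem setOf_memFilt_zero : {y : C | MemFilt S 0 y} = {y | IsZero y} := by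
  ext y
  constructor
  · rintro ⟨c, -, h0, htop, -⟩
    by_contra hy
    have := nontrivial_of_not_isZero hy
    exact bot_ne_top (h0.symm.trans htop)
  · intro hy
    exact ⟨fun _ => ⊥, monotone_const, rfl,
      le_antisymm le_top (le_of_comm 0 (hy.eq_of_tgt _ _)), fun i => i.elim0⟩

theorem setOf_memFilt_succ_subset (n : ℕ) :
    {y : C | MemFilt S (n + 1) y} ⊆ SesStar {x | MemFilt S n x} {s | MemS0 S s} := by
  rintro y ⟨c, hc, h0, htop, hq⟩
  set A := c (Fin.last n).castSucc
  have hle (i : Fin (n + 1)) : c i.castSucc ≤ A :=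
    hc (Fin.castSucc_le_castSucc_iff.2 (Fin.le_last i))
  refine ⟨A, cokernel A.arrow, A.arrow, cokernel.π _, cokernel.condition _,
    ⟨fun i => mk (ofLE _ _ (hle i)), fun i j hij => ?_, ?_, ?_, fun i => ?_⟩, ?_,
    shortExact_cokernel _⟩
  · exact mk_le_mk_of_comm (ofLE _ _ (hc (Fin.castSucc_le_castSucc_iff.2 hij)))
      (ofLE_comp_ofLE ..)
  · rw [mk_eq_bot_iff_zero, ← cancel_mono A.arrow, ofLE_arrow, zero_comp, Fin.castSucc_zero, h0,
      bot_arrow]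
  · have : IsIso (ofLE _ _ (hle (Fin.last n))) := by rw [ofLE_refl]; infer_instance
    exact mk_eq_top_of_isIso _
  · exact (memS0_cokernel_ofLE_iff _ rfl rfl (ofLE_comp_ofLE ..)).2 (hq i.castSucc)
  · have hB : c (Fin.last n).succ = mk (𝟙 y) := by rw [Fin.succ_last, htop, top_eq_id]
    exact (memS0_cokernel_ofLE_iff _ (mk_arrow A).symm hB (Category.comp_id A.arrow)).1
      (hq (Fin.last n))

theorem sesStar_subset_setOf_memFilt_succ (n : ℕ) :
    SesStar {x | MemFilt S n x} {s | MemS0 S s} ⊆ {y : C | MemFilt S (n + 1) y} := by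
  rintro y ⟨x, s, f, g, w, ⟨d, hd, hd0, hdtop, hdq⟩, hs, hS⟩
  have := hS.mono_f
  set c : Fin (n + 2) → Subobject y := Fin.snoc (fun i => mk ((d i).arrow ≫ f)) ⊤
  have hc_castSucc (i : Fin (n + 1)) : c i.castSucc = mk ((d i).arrow ≫ f) :=
    Fin.snoc_castSucc ..
  have hc_last : c (Fin.last (n + 1)) = ⊤ := Fin.snoc_last ..
  refine ⟨c, Fin.monotone_iff_le_succ.2 fun i => ?_, ?_, hc_last, fun i => ?_⟩
  · rcases i.eq_castSucc_or_eq_last with ⟨i, rfl⟩ | rfl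
    · rw [Fin.succ_castSucc, hc_castSucc, hc_castSucc]
      exact monotone_mk_arrow_comp f (hd (Fin.castSucc_le_succ i))
    · rw [Fin.succ_last, hc_last]
      exact le_top
  · rw [← Fin.castSucc_zero, hc_castSucc, hd0, mk_bot_arrow_comp]
  · rcases i.eq_castSucc_or_eq_last with ⟨i, rfl⟩ | rfl
    · have hB : c i.castSucc.succ = mk ((d i.succ).arrow ≫ f) := by
        rw [Fin.succ_castSucc, hc_castSucc]
      exact (memS0_cokernel_ofLE_iff _ (hc_castSucc _) hB (by simp)).2 (hdq i)
    · have : IsIso (d (Fin.last n)).arrow := by rw [hdtop]; infer_instance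
      have hA : c (Fin.last n).castSucc = mk f := by
        rw [hc_castSucc]
        exact mk_eq_mk_of_comm _ _ (asIso (d (Fin.last n)).arrow) rfl
      have hB : c (Fin.last n).succ = mk (𝟙 y) := by rw [Fin.succ_last, hc_last, top_eq_id]
      exact (memS0_cokernel_ofLE_iff _ hA hB (Category.comp_id f)).2
        (hs.of_iso (cokernelIsoOfShortExact hS).symm)

theorem setOf_memFilt_succ (n : ℕ) :
    {y : C | MemFilt S (n + 1) y} = SesStar {x | MemFilt S n x} {s | MemS0 S s} :=
  (setOf_memFilt_succ_subset n).antisymm (sesStar_subset_setOf_memFilt_succ n)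

end Filtration

/-- `(S)_{m+n} = (S)_m * (S)_n`. -/
theorem statement1 (S : Set C) (m n : ℕ) :
    {y : C | MemFilt S (m + n) y} =
      SesStar {y : C | MemFilt S m y} {y : C | MemFilt S n y} := by
  induction n with
  | zero =>
    rw [setOf_memFilt_zero, sesStar_setOf_isZero (isoClosed_setOf_memFilt m)]
    rfl
  | succ n ih =>
    rw [← add_assoc, setOf_memFilt_succ, setOf_memFilt_succ, ih, sesStar_assoc]

end Paper
end

section
/- In an abelian category A, if full subcategories X and Z are both closed under quotients (i.e. closed under images of epimorphisms), then the class X * Z of extensions of objects of Z by objects of X is also closed under quotients. -/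
open CategoryTheory CategoryTheory.Limits

namespace Paper

variable {C : Type*} [Category C] [Abelian C]

/-- If `X` and `Z` are closed under quotients, so is `X * Z`. -/
theorem statement3 (X Z : Set C)
    (hX : ClosedUnderQuotients X) (hZ : ClosedUnderQuotients Z) :
    ClosedUnderQuotients (SesStar X Z) := by
  rintro y a p hp ⟨x, z, i, g, w, hx, hz, hse⟩
  haveI := hp
  set k : x ⟶ a := i ≫ p with hk
  refine ⟨Abelian.image k, cokernel k, Abelian.image.ι k, cokernel.π k,
    kernel.condition _, ?_, ?_, ?_⟩
  · exact hX (Abelian.factorThruImage k) inferInstance hx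
  · -- cokernel k is a quotient of z
    have hcond : i ≫ (p ≫ cokernel.π k) = 0 := by
      rw [← Category.assoc, ← hk, cokernel.condition]
    let q := hse.gIsCokernel.desc (CokernelCofork.ofπ (p ≫ cokernel.π k) hcond)
    have hfac : g ≫ q = p ≫ cokernel.π k :=
      hse.gIsCokernel.fac _ WalkingParallelPair.one
    have : Epi (p ≫ cokernel.π k) := epi_comp _ _
    have : Epi q := by
      refine @epi_of_epi _ _ _ _ _ g q ?_
      rw [hfac]; exact this
    exact hZ q this hz
  · exact ShortComplex.ShortExact.mk'
      (ShortComplex.exact_of_f_is_kernel _ (kernelIsKernel (cokernel.π k)))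
      inferInstance inferInstance

end Paper
end

section
/- In an abelian category A, if full subcategories X and Z are both closed under subobjects, then X * Z is closed under subobjects. -/
open CategoryTheory CategoryTheory.Limits

namespace Paper

variable {C : Type*} [Category C] [Abelian C]

lemma shortExact_kernel_factorThruImage {a z : C} (g : a ⟶ z) :
    (ShortComplex.mk (kernel.ι g) (factorThruImage g)
      (by simp [← cancel_mono (image.ι g)])).ShortExact where
  exact := (ShortComplex.exact_iff_of_epi_of_isIso_of_mono
    (S₁ := ShortComplex.mk (kernel.ι g) (factorThruImage g) _)
    (S₂ := ShortComplex.mk (kernel.ι g) g (kernel.condition g))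
    { τ₁ := 𝟙 _, τ₂ := 𝟙 _, τ₃ := image.ι g }).2 (ShortComplex.exact_kernel g)

/-- The kernel of `a ↪ y ↠ z` is `a ∩ x`, where `x = ker (y ↠ z)`. -/
lemma exists_mono_kernel_comp_of_shortExact {S : ShortComplex C} (hS : S.ShortExact)
    {a : C} (f : a ⟶ S.X₂) [Mono f] : ∃ l : kernel (f ≫ S.g) ⟶ S.X₁, Mono l := by
  have := hS.mono_f
  obtain ⟨l, hl⟩ := hS.exact.lift' (kernel.ι (f ≫ S.g) ≫ f) (by simp)
  exact ⟨l, mono_of_mono_fac hl⟩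

/-- If `X` and `Z` are closed under subobjects, so is `X * Z`. -/
theorem statement4 (X Z : Set C)
    (hX : ClosedUnderSubobjects X) (hZ : ClosedUnderSubobjects Z) :
    ClosedUnderSubobjects (SesStar X Z) := by
  rintro a y f hf ⟨x, z, i, p, w, hx, hz, hS⟩
  obtain ⟨l, hl⟩ := exists_mono_kernel_comp_of_shortExact hS f
  exact ⟨kernel (f ≫ p), image (f ≫ p), _, _, _, hX l hl hx,
    hZ (image.ι _) inferInstance hz, shortExact_kernel_factorThruImage _⟩

end Paper
end

section
/- In an abelian category A, for any full subcategory S, the extension closure of the class of quotients of objects of S, ⟨Gen(S)⟩, is closed under quotients; dually, the extension closure of the class of subobjects of objects of S, ⟨Sub(S)⟩, is closed under subobjects. -/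
open CategoryTheory CategoryTheory.Limits

namespace Paper

variable {C : Type*} [Category C] [Abelian C]

section Aux

lemma isZero_of_epi_of_isZero {X Y : C} (d : X ⟶ Y) [Epi d] (h : IsZero X) : IsZero Y := by
  rw [IsZero.iff_id_eq_zero, ← cancel_epi d, comp_zero]
  exact h.eq_of_src _ _

lemma isZero_of_mono_of_isZero {X Y : C} (d : X ⟶ Y) [Mono d] (h : IsZero Y) : IsZero X := by
  rw [IsZero.iff_id_eq_zero, ← cancel_mono d, zero_comp]
  exact h.eq_of_tgt _ _

lemma memS0_gen_of_epi (S : Set C) {X Y : C} (d : X ⟶ Y) (hd : Epi d)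
    (h : MemS0 (GenCl S) X) : MemS0 (GenCl S) Y := by
  haveI := hd
  rcases h with ⟨s, ⟨t, ht, g, hg⟩, ⟨e⟩⟩ | h
  · haveI := hg
    exact Or.inl ⟨Y, ⟨t, ht, g ≫ e.inv ≫ d, inferInstance⟩, ⟨Iso.refl Y⟩⟩
  · exact Or.inr (isZero_of_epi_of_isZero d h)

lemma memS0_sub_of_mono (S : Set C) {X Y : C} (d : X ⟶ Y) (hd : Mono d)
    (h : MemS0 (SubCl S) Y) : MemS0 (SubCl S) X := by
  haveI := hd
  rcases h with ⟨s, ⟨t, ht, g, hg⟩, ⟨e⟩⟩ | h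
  · haveI := hg
    exact Or.inl ⟨X, ⟨t, ht, d ≫ e.hom ≫ g, inferInstance⟩, ⟨Iso.refl X⟩⟩
  · exact Or.inr (isZero_of_mono_of_isZero d h)

lemma kernelSubobject_eq_bot_of_mono {X Y : C} (f : X ⟶ Y) [Mono f] :
    kernelSubobject f = ⊥ := by
  have h : (kernelSubobject f).arrow = 0 := by
    rw [← cancel_mono f, zero_comp]
    exact kernelSubobject_arrow_comp f
  rw [← Subobject.mk_arrow (kernelSubobject f), Subobject.mk_eq_bot_iff_zero]
  exact h

end Aux

lemma extClosure_gen_quot (S : Set C) : ClosedUnderQuotients (ExtClosure (GenCl S)) := by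
  rintro y a f hf ⟨n, c, hc, h0, hl, hq⟩
  haveI : Epi f := hf
  refine ⟨n, fun i => imageSubobject ((c i).arrow ≫ f), ?_, ?_, ?_, ?_⟩
  · intro i j hij
    dsimp only
    have h : (c i).arrow ≫ f = Subobject.ofLE _ _ (hc hij) ≫ ((c j).arrow ≫ f) := by
      rw [← Category.assoc, Subobject.ofLE_arrow]
    rw [h]
    exact imageSubobject_comp_le _ _
  · dsimp only
    rw [h0, Subobject.bot_arrow, zero_comp, imageSubobject_zero]
  · dsimp only
    rw [hl]
    haveI : Epi ((⊤ : Subobject y).arrow ≫ f) := epi_comp _ _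
    haveI : Epi (imageSubobject ((⊤ : Subobject y).arrow ≫ f)).arrow :=
      epi_of_epi_fac (imageSubobject_arrow_comp ((⊤ : Subobject y).arrow ≫ f))
    haveI := isIso_of_mono_of_epi (imageSubobject ((⊤ : Subobject y).arrow ≫ f)).arrow
    exact Subobject.eq_top_of_isIso_arrow _
  · intro i
    dsimp only
    set A := c i.castSucc with hA
    set B := c i.succ with hB
    have le : A ≤ B := hc (Fin.castSucc_le_succ i)
    have le' : imageSubobject (A.arrow ≫ f) ≤ imageSubobject (B.arrow ≫ f) := by
      have h : A.arrow ≫ f = Subobject.ofLE A B le ≫ (B.arrow ≫ f) := by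
        rw [← Category.assoc, Subobject.ofLE_arrow]
      rw [h]
      exact imageSubobject_comp_le _ _
    set q : (B : C) ⟶ cokernel (Subobject.ofLE _ _ le') :=
      factorThruImageSubobject (B.arrow ≫ f) ≫ cokernel.π _ with hqdef
    have key : Subobject.ofLE A B le ≫ factorThruImageSubobject (B.arrow ≫ f) =
        factorThruImageSubobject (A.arrow ≫ f) ≫ Subobject.ofLE _ _ le' := by
      rw [← cancel_mono (imageSubobject (B.arrow ≫ f)).arrow]
      rw [Category.assoc, imageSubobject_arrow_comp, Category.assoc, Subobject.ofLE_arrow,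
        imageSubobject_arrow_comp, ← Category.assoc, Subobject.ofLE_arrow]
    have hzero : Subobject.ofLE A B le ≫ q = 0 := by
      rw [hqdef, ← Category.assoc, key, Category.assoc, cokernel.condition, comp_zero]
    haveI hepiq : Epi q := epi_comp _ _
    have hd : Epi (cokernel.desc _ q hzero) :=
      epi_of_epi_fac (cokernel.π_desc (Subobject.ofLE A B le) q hzero)
    exact memS0_gen_of_epi S _ hd (hq i)

lemma sub_step {a y : C} (f : a ⟶ y) [Mono f] (A B : Subobject y) (le : A ≤ B)
    (le' : kernelSubobject (f ≫ cokernel.π A.arrow) ≤ kernelSubobject (f ≫ cokernel.π B.arrow)) :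
    ∃ m : cokernel (Subobject.ofLE _ _ le') ⟶ cokernel (Subobject.ofLE A B le), Mono m := by
  have hA'0 : (kernelSubobject (f ≫ cokernel.π A.arrow)).arrow ≫ (f ≫ cokernel.π A.arrow) = 0 :=
    kernelSubobject_arrow_comp _
  have hB'0 : (kernelSubobject (f ≫ cokernel.π B.arrow)).arrow ≫ (f ≫ cokernel.π B.arrow) = 0 :=
    kernelSubobject_arrow_comp _
  set A' := kernelSubobject (f ≫ cokernel.π A.arrow)
  set B' := kernelSubobject (f ≫ cokernel.π B.arrow)
  have hr0 : (B'.arrow ≫ f) ≫ cokernel.π B.arrow = 0 := by rw [Category.assoc]; exact hB'0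
  set r : (B' : C) ⟶ (B : C) := Abelian.monoLift B.arrow (B'.arrow ≫ f) hr0 with hrdef
  have hr : r ≫ B.arrow = B'.arrow ≫ f := Abelian.monoLift_comp _ _ _
  set g0 : (B' : C) ⟶ cokernel (Subobject.ofLE A B le) := r ≫ cokernel.π _ with hg0def
  have factor : ∀ {T : C} (t : T ⟶ (B' : C)), t ≫ g0 = 0 →
      ∃ w : T ⟶ (A' : C), w ≫ Subobject.ofLE A' B' le' = t := by
    intro T t ht
    have ht' : (t ≫ r) ≫ cokernel.π (Subobject.ofLE A B le) = 0 := by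
      rw [Category.assoc]; exact ht
    set v : T ⟶ (A : C) := Abelian.monoLift (Subobject.ofLE A B le) (t ≫ r) ht' with hvdef
    have hv : v ≫ Subobject.ofLE A B le = t ≫ r := Abelian.monoLift_comp _ _ _
    have h1 : (t ≫ B'.arrow) ≫ f = v ≫ A.arrow := by
      calc (t ≫ B'.arrow) ≫ f = t ≫ B'.arrow ≫ f := Category.assoc _ _ _
        _ = t ≫ r ≫ B.arrow := by rw [hr]
        _ = (t ≫ r) ≫ B.arrow := (Category.assoc _ _ _).symm
        _ = (v ≫ Subobject.ofLE A B le) ≫ B.arrow := by rw [hv]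
        _ = v ≫ Subobject.ofLE A B le ≫ B.arrow := Category.assoc _ _ _
        _ = v ≫ A.arrow := by rw [Subobject.ofLE_arrow]
    have h2 : (t ≫ B'.arrow) ≫ (f ≫ cokernel.π A.arrow) = 0 := by
      calc (t ≫ B'.arrow) ≫ (f ≫ cokernel.π A.arrow)
          = ((t ≫ B'.arrow) ≫ f) ≫ cokernel.π A.arrow := (Category.assoc _ _ _).symm
        _ = (v ≫ A.arrow) ≫ cokernel.π A.arrow := by rw [h1]
        _ = v ≫ A.arrow ≫ cokernel.π A.arrow := Category.assoc _ _ _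
        _ = 0 := by rw [cokernel.condition, comp_zero]
    refine ⟨factorThruKernelSubobject _ (t ≫ B'.arrow) h2, ?_⟩
    rw [← cancel_mono B'.arrow, Category.assoc, Subobject.ofLE_arrow,
      factorThruKernelSubobject_comp_arrow]
  have claim1 : Subobject.ofLE A' B' le' ≫ g0 = 0 := by
    have hA0' : (A'.arrow ≫ f) ≫ cokernel.π A.arrow = 0 := by
      rw [Category.assoc]; exact hA'0
    set t : (A' : C) ⟶ (A : C) := Abelian.monoLift A.arrow (A'.arrow ≫ f) hA0' with htdef
    have ht : t ≫ A.arrow = A'.arrow ≫ f := Abelian.monoLift_comp _ _ _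
    have hcomm : Subobject.ofLE A' B' le' ≫ r = t ≫ Subobject.ofLE A B le := by
      rw [← cancel_mono B.arrow]
      calc (Subobject.ofLE A' B' le' ≫ r) ≫ B.arrow
          = Subobject.ofLE A' B' le' ≫ r ≫ B.arrow := Category.assoc _ _ _
        _ = Subobject.ofLE A' B' le' ≫ B'.arrow ≫ f := by rw [hr]
        _ = (Subobject.ofLE A' B' le' ≫ B'.arrow) ≫ f := (Category.assoc _ _ _).symm
        _ = A'.arrow ≫ f := by rw [Subobject.ofLE_arrow]
        _ = t ≫ A.arrow := ht.symm
        _ = t ≫ Subobject.ofLE A B le ≫ B.arrow := by rw [Subobject.ofLE_arrow]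
        _ = (t ≫ Subobject.ofLE A B le) ≫ B.arrow := (Category.assoc _ _ _).symm
    rw [hg0def, ← Category.assoc, hcomm, Category.assoc, cokernel.condition, comp_zero]
  have hu0 : Subobject.ofLE A' B' le' ≫ cokernel.π (kernel.ι g0) = 0 := by
    rw [← kernel.lift_ι g0 (Subobject.ofLE A' B' le') claim1, Category.assoc,
      cokernel.condition, comp_zero]
  obtain ⟨w, hw⟩ := factor (kernel.ι g0) (kernel.condition g0)
  have hv0 : kernel.ι g0 ≫ cokernel.π (Subobject.ofLE A' B' le') = 0 := by
    rw [← hw, Category.assoc, cokernel.condition, comp_zero]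
  set u : cokernel (Subobject.ofLE A' B' le') ⟶ cokernel (kernel.ι g0) :=
    cokernel.desc _ (cokernel.π _) hu0 with hudef
  set v2 : cokernel (kernel.ι g0) ⟶ cokernel (Subobject.ofLE A' B' le') :=
    cokernel.desc _ (cokernel.π _) hv0 with hv2def
  haveI : IsIso u := by
    refine ⟨v2, ?_, ?_⟩
    · apply coequalizer.hom_ext
      simp only [hudef, hv2def, cokernel.π_desc_assoc, cokernel.π_desc, Category.comp_id]
    · apply coequalizer.hom_ext
      simp only [hudef, hv2def, cokernel.π_desc_assoc, cokernel.π_desc, Category.comp_id]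
  exact ⟨u ≫ Abelian.factorThruCoimage g0, mono_comp _ _⟩

lemma extClosure_sub_sub (S : Set C) : ClosedUnderSubobjects (ExtClosure (SubCl S)) := by
  rintro a y f hf ⟨n, c, hc, h0, hl, hq⟩
  haveI : Mono f := hf
  have lemono : ∀ {i j : Fin (n+1)}, i ≤ j →
      kernelSubobject (f ≫ cokernel.π (c i).arrow) ≤
        kernelSubobject (f ≫ cokernel.π (c j).arrow) := by
    intro i j hij
    apply le_kernelSubobject
    have hij0 : (c i).arrow ≫ cokernel.π (c j).arrow = 0 := by
      rw [← Subobject.ofLE_arrow (hc hij), Category.assoc, cokernel.condition, comp_zero]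
    have hfac : cokernel.π (c i).arrow ≫ cokernel.desc _ (cokernel.π (c j).arrow) hij0 =
        cokernel.π (c j).arrow := cokernel.π_desc _ _ _
    have hk : (kernelSubobject (f ≫ cokernel.π (c i).arrow)).arrow ≫
        (f ≫ cokernel.π (c i).arrow) = 0 := kernelSubobject_arrow_comp _
    calc (kernelSubobject (f ≫ cokernel.π (c i).arrow)).arrow ≫ f ≫ cokernel.π (c j).arrow
        = (kernelSubobject (f ≫ cokernel.π (c i).arrow)).arrow ≫
            f ≫ cokernel.π (c i).arrow ≫ cokernel.desc _ (cokernel.π (c j).arrow) hij0 := by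
          rw [hfac]
      _ = ((kernelSubobject (f ≫ cokernel.π (c i).arrow)).arrow ≫
            (f ≫ cokernel.π (c i).arrow)) ≫ cokernel.desc _ (cokernel.π (c j).arrow) hij0 := by
          simp only [Category.assoc]
      _ = 0 := by rw [hk, zero_comp]
  refine ⟨n, fun i => kernelSubobject (f ≫ cokernel.π (c i).arrow), fun i j h => lemono h,
    ?_, ?_, ?_⟩
  · dsimp only
    rw [h0, Subobject.bot_arrow]
    rw [kernelSubobject_comp_mono f (cokernel.π (0 : ((⊥ : Subobject y) : C) ⟶ y))]
    exact kernelSubobject_eq_bot_of_mono f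
  · dsimp only
    rw [hl, cokernel.π_of_epi, comp_zero, kernelSubobject_zero]
  · intro i
    dsimp only
    obtain ⟨m, hm⟩ := sub_step f (c i.castSucc) (c i.succ) (hc (Fin.castSucc_le_succ i))
      (lemono (Fin.castSucc_le_succ i))
    exact memS0_sub_of_mono S m hm (hq i)


/-- `⟨Gen S⟩` is closed under quotients and `⟨Sub S⟩` is closed under
subobjects. -/
theorem statement5 (S : Set C) :
    ClosedUnderQuotients (ExtClosure (GenCl S)) ∧
      ClosedUnderSubobjects (ExtClosure (SubCl S)) :=
  ⟨extClosure_gen_quot S, extClosure_sub_sub S⟩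

end Paper
end

section
/- In an abelian category A with a pair of torsion pairs (T, F) and (T', F') satisfying T ⊆ T', one has (F ∩ T') * F' = F and T * (F ∩ T') = T'. -/
open CategoryTheory CategoryTheory.Limits

namespace Paper

variable {C : Type*} [Category C] [Abelian C]

/-- For a torsion pair `(T, F)`, an object receiving no nonzero map from `T` is in `F`. -/
lemma mem_F_of_perp (Tc F : Set C) (h : IsTorsionPair Tc F) (x : C)
    (hx : ∀ t ∈ Tc, ∀ f : t ⟶ x, f = 0) : x ∈ F := by
  obtain ⟨t, z, f, g, w, ht, hz, hse⟩ := h.2.2.2 x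
  have hf0 : f = 0 := hx t ht f
  have : Mono g := hse.exact.mono_g hf0
  have : Epi g := hse.epi_g
  have : IsIso g := isIso_of_mono_of_epi g
  exact h.2.1 (asIso g).symm hz

/-- For a torsion pair `(T, F)`, an object admitting no nonzero map to `F` is in `T`. -/
lemma mem_T_of_perp (Tc F : Set C) (h : IsTorsionPair Tc F) (x : C)
    (hx : ∀ f ∈ F, ∀ g : x ⟶ f, g = 0) : x ∈ Tc := by
  obtain ⟨t, z, f, g, w, ht, hz, hse⟩ := h.2.2.2 x
  have hg0 : g = 0 := hx z hz g
  have : Epi f := hse.exact.epi_f hg0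
  have : Mono f := hse.mono_f
  have : IsIso f := isIso_of_mono_of_epi f
  exact h.1 (asIso f) ht

/-- Given torsion pairs `(T, F)` and `(T', F')` with `T ⊆ T'`, one has
`(F ∩ T') * F' = F` and `T * (F ∩ T') = T'`. -/
theorem statement18 (Tc F Tc' F' : Set C)
    (h : IsTorsionPair Tc F) (h' : IsTorsionPair Tc' F') (hTT : Tc ⊆ Tc') :
    SesStar (F ∩ Tc') F' = F ∧ SesStar Tc (F ∩ Tc') = Tc' := by
  constructor
  · apply Set.eq_of_subset_of_subset
    · rintro y ⟨x, z, f, g, w, ⟨hxF, hxT'⟩, hzF', hse⟩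
      apply mem_F_of_perp Tc F h y
      intro t ht φ
      have hφg : φ ≫ g = 0 := h'.2.2.1 t (hTT ht) z hzF' (φ ≫ g)
      have : Mono f := hse.mono_f
      have hlift : hse.exact.lift φ hφg ≫ f = φ := hse.exact.lift_f φ hφg
      rw [← hlift, h.2.2.1 t ht x hxF (hse.exact.lift φ hφg), zero_comp]
    · intro y hyF
      obtain ⟨t', f', f, g, w, ht', hf', hse⟩ := h'.2.2.2 y
      refine ⟨t', f', f, g, w, ⟨?_, ht'⟩, hf', hse⟩
      apply mem_F_of_perp Tc F h t'
      intro t ht ψ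
      have : Mono f := hse.mono_f
      have : ψ ≫ f = 0 := h.2.2.1 t ht y hyF (ψ ≫ f)
      exact zero_of_comp_mono f this
  · apply Set.eq_of_subset_of_subset
    · rintro y ⟨x, z, f, g, w, hxT, ⟨hzF, hzT'⟩, hse⟩
      apply mem_T_of_perp Tc' F' h' y
      intro f' hf' φ
      have hfφ : f ≫ φ = 0 := h'.2.2.1 x (hTT hxT) f' hf' (f ≫ φ)
      have : Epi g := hse.epi_g
      have hdesc : g ≫ hse.exact.desc φ hfφ = φ := hse.exact.g_desc φ hfφ
      rw [← hdesc, h'.2.2.1 z hzT' f' hf' (hse.exact.desc φ hfφ), comp_zero]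
    · intro y hyT'
      obtain ⟨t, fo, f, g, w, ht, hfo, hse⟩ := h.2.2.2 y
      refine ⟨t, fo, f, g, w, ht, ⟨hfo, ?_⟩, hse⟩
      apply mem_T_of_perp Tc' F' h' fo
      intro f' hf' ψ
      have : Epi g := hse.epi_g
      have : g ≫ ψ = 0 := h'.2.2.1 y hyT' f' hf' (g ≫ ψ)
      exact zero_of_epi_comp g this

end Paper
end
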